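/- arXiv:math/0611944 — 2 statements merged into one kernel-verified Lean document; each statement's English description precedes it below -/
import Mathlib

section
/- For any element x of a unital algebra A over a field F of characteristic 0, any a, d ∈ F, and nonnegative integer r, one has Σ_{m+n=r} ((−1)^n / (m! n!)) x_a^[m] x_d^⟨n⟩ = C(a−d, r), where C(a−d, r) = (a−d)(a−d−1)···(a−d−r+1)/r! is the generalized binomial coefficient (a scalar multiple of the identity of A). -/
/-- Rising factorial `x_a^⟨k⟩ = (x+a)(x+a+1)⋯(x+a+k−1)` in an `F`-algebra. -/
noncomputable def rise {F A : Type*} [Field F] [Ring A] [Algebra F A]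
    (x : A) (a : F) : ℕ → A
  | 0 => 1
  | n + 1 => rise x a n * (x + algebraMap F A (a + n))

/-- Falling factorial `x_a^[k] = (x+a)(x+a−1)⋯(x+a−k+1)` in an `F`-algebra. -/
noncomputable def fall {F A : Type*} [Field F] [Ring A] [Algebra F A]
    (x : A) (a : F) : ℕ → A
  | 0 => 1
  | n + 1 => fall x a n * (x + algebraMap F A (a - n))

/-- Generalized binomial coefficient `C(c, r) = c(c−1)⋯(c−r+1)/r!`. -/
noncomputable def gbinom {F : Type*} [Field F] (c : F) (r : ℕ) : F :=
  (∏ i ∈ Finset.range r, (c - i)) / r.factorial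

section Aux

variable {F B : Type*} [Field F] [CharZero F] [CommRing B] [Algebra F B]

private lemma coef1 (m n : ℕ) :
    ((m + 1 : ℕ) : F) * ((-1 : F) ^ n / ((m+1).factorial * n.factorial))
      = (-1 : F) ^ n / (m.factorial * n.factorial) := by
  have h3 : ((m : F) + 1) ≠ 0 := Nat.cast_add_one_ne_zero m
  rw [Nat.factorial_succ]
  push_cast
  rw [mul_div_assoc', mul_assoc, mul_div_mul_left _ _ h3]

private lemma coef2 (m n : ℕ) :
    ((n + 1 : ℕ) : F) * ((-1 : F) ^ (n+1) / (m.factorial * (n+1).factorial))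
      = -((-1 : F) ^ n / (m.factorial * n.factorial)) := by
  have h3 : ((n : F) + 1) ≠ 0 := Nat.cast_add_one_ne_zero n
  rw [Nat.factorial_succ, pow_succ]
  push_cast
  rw [mul_left_comm ((m.factorial : F)) _ _, mul_div_assoc',
    mul_div_mul_left _ _ h3, mul_neg_one, neg_div]

private lemma gbinom_succ (c : F) (r : ℕ) :
    gbinom c (r + 1) = (((r + 1 : ℕ) : F))⁻¹ * ((c - r) * gbinom c r) := by
  unfold gbinom
  rw [Finset.prod_range_succ, Nat.factorial_succ]
  have h1 : ((r.factorial : F)) ≠ 0 := Nat.cast_ne_zero.2 r.factorial_ne_zero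
  have h3 : ((r + 1 : ℕ) : F) ≠ 0 := Nat.cast_ne_zero.2 (Nat.succ_ne_zero r)
  push_cast at h3 ⊢
  field_simp

private lemma key_comm (y : B) (a d : F) (r : ℕ) :
    ∑ p ∈ Finset.HasAntidiagonal.antidiagonal r,
        (((-1 : F) ^ p.2 / (p.1.factorial * p.2.factorial)) • (fall y a p.1 * rise y d p.2))
      = gbinom (a - d) r • (1 : B) := by
  induction r with
  | zero => simp [fall, rise, gbinom]
  | succ r ih =>
    set g : ℕ → ℕ → F := fun m n => (-1 : F) ^ n / (m.factorial * n.factorial) with hg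
    set t : ℕ → ℕ → B := fun m n => fall y a m * rise y d n with ht
    have hr1 : ((r + 1 : ℕ) : F) ≠ 0 := Nat.cast_ne_zero.2 (Nat.succ_ne_zero r)
    have key : ((r + 1 : ℕ) : F) • ∑ p ∈ Finset.HasAntidiagonal.antidiagonal (r+1), g p.1 p.2 • t p.1 p.2
        = (a - d - r) • ∑ p ∈ Finset.HasAntidiagonal.antidiagonal r, g p.1 p.2 • t p.1 p.2 := by
      rw [Finset.smul_sum]
      have step1 : ∀ p ∈ Finset.HasAntidiagonal.antidiagonal (r+1),
          ((r + 1 : ℕ) : F) • (g p.1 p.2 • t p.1 p.2)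
            = ((p.1 : F)) • (g p.1 p.2 • t p.1 p.2) + ((p.2 : F)) • (g p.1 p.2 • t p.1 p.2) := by
        intro p hp
        rw [Finset.HasAntidiagonal.mem_antidiagonal] at hp
        rw [← add_smul, ← Nat.cast_add, hp]
      rw [Finset.sum_congr rfl step1, Finset.sum_add_distrib]
      have s1 : ∑ p ∈ Finset.HasAntidiagonal.antidiagonal (r+1), ((p.1 : F)) • (g p.1 p.2 • t p.1 p.2)
          = ∑ p ∈ Finset.HasAntidiagonal.antidiagonal r,
              g p.1 p.2 • (fall y a p.1 * (y + algebraMap F B (a - p.1)) * rise y d p.2) := by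
        rw [Finset.Nat.sum_antidiagonal_succ
          (f := fun p : ℕ × ℕ => ((p.1 : F)) • (g p.1 p.2 • t p.1 p.2))]
        simp only [Nat.cast_zero, zero_smul, zero_add]
        refine Finset.sum_congr rfl fun p hp => ?_
        have h1 : t (p.1 + 1) p.2
            = fall y a p.1 * (y + algebraMap F B (a - p.1)) * rise y d p.2 := by
          show fall y a (p.1 + 1) * rise y d p.2 = _
          rw [fall]
        rw [smul_smul, h1]
        congr 1
        exact coef1 p.1 p.2
      have s2 : ∑ p ∈ Finset.HasAntidiagonal.antidiagonal (r+1), ((p.2 : F)) • (g p.1 p.2 • t p.1 p.2)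
          = ∑ p ∈ Finset.HasAntidiagonal.antidiagonal r,
              -(g p.1 p.2 • (fall y a p.1 * rise y d p.2 * (y + algebraMap F B (d + p.2)))) := by
        rw [Finset.Nat.sum_antidiagonal_succ'
          (f := fun p : ℕ × ℕ => ((p.2 : F)) • (g p.1 p.2 • t p.1 p.2))]
        simp only [Nat.cast_zero, zero_smul, zero_add]
        refine Finset.sum_congr rfl fun p hp => ?_
        have h1 : t p.1 (p.2 + 1)
            = fall y a p.1 * rise y d p.2 * (y + algebraMap F B (d + p.2)) := by
          show fall y a p.1 * rise y d (p.2 + 1) = _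
          rw [rise, mul_assoc]
        rw [smul_smul, h1, ← neg_smul]
        congr 1
        exact coef2 p.1 p.2
      rw [s1, s2, ← Finset.sum_add_distrib, Finset.smul_sum]
      refine Finset.sum_congr rfl fun p hp => ?_
      rw [Finset.HasAntidiagonal.mem_antidiagonal] at hp
      have expand : fall y a p.1 * (y + algebraMap F B (a - p.1)) * rise y d p.2
            + -(fall y a p.1 * rise y d p.2 * (y + algebraMap F B (d + p.2)))
          = (a - d - r) • (t p.1 p.2) := by
        have hsc : a - (p.1 : F) - (d + (p.2 : F)) = a - d - (r : F) := by
          have hc : ((p.1 : F)) + ((p.2 : F)) = (r : F) := by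
            rw [← Nat.cast_add, hp]
          linear_combination -hc
        have hmap : algebraMap F B (a - p.1) - algebraMap F B (d + p.2)
            = algebraMap F B (a - d - r) := by
          rw [← map_sub, hsc]
        rw [Algebra.smul_def, ht]
        calc fall y a p.1 * (y + algebraMap F B (a - p.1)) * rise y d p.2
              + -(fall y a p.1 * rise y d p.2 * (y + algebraMap F B (d + p.2)))
            = fall y a p.1 * rise y d p.2
                * (algebraMap F B (a - p.1) - algebraMap F B (d + p.2)) := by ring
          _ = _ := by rw [hmap]; ring
      rw [← smul_neg, ← smul_add, expand, smul_comm]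
    calc ∑ p ∈ Finset.HasAntidiagonal.antidiagonal (r+1), g p.1 p.2 • t p.1 p.2
        = (((r + 1 : ℕ) : F))⁻¹ • (((r + 1 : ℕ) : F)
            • ∑ p ∈ Finset.HasAntidiagonal.antidiagonal (r+1), g p.1 p.2 • t p.1 p.2) :=
          (inv_smul_smul₀ hr1 _).symm
      _ = (((r + 1 : ℕ) : F))⁻¹ • ((a - d - r) • (gbinom (a - d) r • (1 : B))) := by
          rw [key, ih]
      _ = gbinom (a - d) (r + 1) • (1 : B) := by
          rw [smul_smul, smul_smul, gbinom_succ, mul_assoc]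

end Aux

section Transfer

variable {F A : Type*} [Field F] [Ring A] [Algebra F A]

private lemma aeval_rise (x : A) (d : F) (n : ℕ) :
    Polynomial.aeval x (rise (Polynomial.X : Polynomial F) d n) = rise x d n := by
  induction n with
  | zero => simp [rise]
  | succ n ih => rw [rise, rise, map_mul, ih, map_add, Polynomial.aeval_X,
      Polynomial.algebraMap_eq, Polynomial.aeval_C]

private lemma aeval_fall (x : A) (a : F) (m : ℕ) :
    Polynomial.aeval x (fall (Polynomial.X : Polynomial F) a m) = fall x a m := by
  induction m with
  | zero => simp [fall]
  | succ m ih => rw [fall, fall, map_mul, ih, map_add, Polynomial.aeval_X,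
      Polynomial.algebraMap_eq, Polynomial.aeval_C]

end Transfer

theorem sum_fall_rise {F A : Type*} [Field F] [CharZero F] [Ring A] [Algebra F A]
    (x : A) (a d : F) (r : ℕ) :
    ∑ p ∈ Finset.HasAntidiagonal.antidiagonal r,
        (((-1 : F) ^ p.2 / (p.1.factorial * p.2.factorial)) • (fall x a p.1 * rise x d p.2))
      = gbinom (a - d) r • (1 : A) := by
  have h := key_comm (Polynomial.X : Polynomial F) a d r
  have h2 := congrArg (Polynomial.aeval x) h
  rw [map_sum, map_smul, map_one] at h2
  simpa only [map_smul, map_mul, aeval_fall, aeval_rise] using h2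
end

section
/- Let A be a unital associative F-algebra (char F = 0) with elements T, L, M satisfying [T, L] = L, [T, M] = bM for a scalar b. Then in (A⊗A)[[t]], with F_a = Σ_{i≥0} (1/i!) T_a^⟨i⟩ ⊗ L^i t^i, one has (M ⊗ 1) F_a = F_{a−b} (M ⊗ 1). -/
open scoped TensorProduct

lemma M_mul_rise {F A : Type*} [Field F] [Ring A] [Algebra F A]
    (T M : A) (b : F) (hTM : T * M - M * T = b • M) (a : F) :
    ∀ i : ℕ, M * rise T a i = rise T (a - b) i * M := by
  intro i
  have hMT : M * T = (T - algebraMap F A b) * M := by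
    rw [sub_mul, ← Algebra.smul_def, ← hTM]; abel
  have hc : ∀ n : ℕ, algebraMap F A (a - b + n)
      = algebraMap F A (a + n) - algebraMap F A b := by
    intro n; rw [← map_sub]; ring_nf
  induction i with
  | zero => simp [rise]
  | succ n ih =>
    show M * (rise T a n * (T + algebraMap F A (a + n)))
      = rise T (a - b) n * (T + algebraMap F A (a - b + n)) * M
    rw [← mul_assoc, ih, mul_assoc, mul_assoc]
    congr 1
    rw [mul_add, hMT, add_mul, hc, ← Algebra.commutes (a + (n : F)) M, sub_mul, sub_mul]
    abel

theorem M_tensor_one_mul_F {F A : Type*} [Field F] [CharZero F] [Ring A] [Algebra F A]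
    (T L M : A) (b : F) (hTL : T * L - L * T = L) (hTM : T * M - M * T = b • M) (a : F) :
    letI Fser : F → PowerSeries (A ⊗[F] A) := fun c =>
      PowerSeries.mk fun i => ((1 : F) / i.factorial) • (rise T c i ⊗ₜ[F] L ^ i)
    (PowerSeries.C (M ⊗ₜ[F] (1 : A))) * Fser a
      = Fser (a - b) * (PowerSeries.C (M ⊗ₜ[F] (1 : A))) := by
  ext i
  simp only [PowerSeries.coeff_C_mul, PowerSeries.coeff_mul_C, PowerSeries.coeff_mk,
    mul_smul_comm, smul_mul_assoc]
  congr 1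
  exact ((SemiconjBy.tmul (R := F)
    (M_mul_rise T M b hTM a i : SemiconjBy M (rise T a i) (rise T (a - b) i))
    (SemiconjBy.one_left L)).pow_right i)
end
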